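/- arXiv:math/0210294 — 5 statements merged into one kernel-verified Lean document; each statement's English description precedes it below -/
import Mathlib

section
/- The ideal generated by the polynomial p₁q₁ + p₂q₂ + p₃q₃ in the polynomial ring ℂ[p₁,p₂,p₃,q₁,q₂,q₃] is a prime ideal. -/
open MvPolynomial

/-- The polynomial p·q = p₁q₁ + p₂q₂ + p₃q₃ in ℂ[p₁,p₂,p₃,q₁,q₂,q₃],
with variables indexed so that `X 0, X 1, X 2` are p₁,p₂,p₃ and
`X 3, X 4, X 5` are q₁,q₂,q₃. -/
noncomputable def pqPoly : MvPolynomial (Fin 6) ℂ :=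
  X 0 * X 3 + X 1 * X 4 + X 2 * X 5

/-!
As a polynomial in p₁ over the factorial ring ℂ[p₂,p₃,q₁,q₂,q₃], p·q = q₁·p₁ + (p₂q₂ + p₃q₃) has
degree one. Its coefficients are coprime: q₁ is prime and does not divide p₂q₂ + p₃q₃, which
survives the substitution q₁ = 0. A primitive polynomial of degree one is irreducible, hence prime
in a factorial ring.
-/

theorem Polynomial.prime_C_mul_X_add_C {R : Type*} [CommRing R] [IsDomain R]
    [UniqueFactorizationMonoid R] {a b : R} (ha : a ≠ 0) (hab : IsRelPrime a b) :
    Prime (C a * X + C b) :=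
  (irreducible_C_mul_X_add_C ha hab).prime

namespace MvPolynomial

variable {R : Type*} [CommRing R] {n : ℕ}

theorem finSuccEquiv_rename_succ (p : MvPolynomial (Fin n) R) :
    finSuccEquiv R n (rename Fin.succ p) = Polynomial.C p := by
  induction p using MvPolynomial.induction_on with
  | C r => simp [finSuccEquiv_apply]
  | add p q hp hq => simp [hp, hq]
  | mul_X p i hp => simp [hp, finSuccEquiv_X_succ]

theorem prime_X_zero_mul_add_rename_succ [IsDomain R] [UniqueFactorizationMonoid R]
    {a b : MvPolynomial (Fin n) R} (ha : a ≠ 0) (hab : IsRelPrime a b) :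
    Prime (X 0 * rename Fin.succ a + rename Fin.succ b) := by
  rw [← MulEquiv.prime_iff (finSuccEquiv R n).toMulEquiv]
  change Prime (finSuccEquiv R n _)
  rw [map_add, map_mul, finSuccEquiv_X_zero, finSuccEquiv_rename_succ, finSuccEquiv_rename_succ,
    mul_comm]
  exact Polynomial.prime_C_mul_X_add_C ha hab

end MvPolynomial

theorem pq_ideal_isPrime :
    (Ideal.span {pqPoly} : Ideal (MvPolynomial (Fin 6) ℂ)).IsPrime := by
  have hdecomp : pqPoly =
      X 0 * rename Fin.succ (X 2) + rename Fin.succ (X 0 * X 3 + X 1 * X 4 : MvPolynomial _ ℂ) := by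
    simp [pqPoly, rename_X]
    ring
  have hX : Prime (X 2 : MvPolynomial (Fin 5) ℂ) := X_prime
  have hndvd : ¬ X 2 ∣ (X 0 * X 3 + X 1 * X 4 : MvPolynomial (Fin 5) ℂ) := by
    rintro ⟨k, hk⟩
    simpa using congrArg (eval fun j => if j = 2 then 0 else 1) hk
  have hprime : Prime pqPoly := by
    rw [hdecomp]
    exact prime_X_zero_mul_add_rename_succ hX.ne_zero
      (hX.irreducible.isRelPrime_iff_not_dvd.2 hndvd)
  exact (Ideal.span_singleton_prime hprime.ne_zero).2 hprime
end

section
/- If P₁, P₂ ∈ ℂ[p₁,p₂,p₃,q₁,q₂,q₃] are polynomials and n ≥ 1 is such that p₂ⁿ·P₁ − p₁ⁿ·P₂ = (p₁q₁+p₂q₂+p₃q₃)·Q for some polynomial Q, then Q can be written as Q = Σ_{j=0}^{n} p₁^{n−j} p₂^{j} Q_j for polynomials Q_j. -/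
open MvPolynomial

lemma mono_decomp (n j : ℕ) (d : Fin 6 →₀ ℕ) (c : ℂ)
    (h1 : j ≤ d 1) (h0 : n - j ≤ d 0) :
    (X 0 : MvPolynomial (Fin 6) ℂ) ^ (n - j) * X 1 ^ j *
      monomial (d - Finsupp.single 0 (n - j) - Finsupp.single 1 j) c = monomial d c := by
  rw [X_pow_eq_monomial, X_pow_eq_monomial, monomial_mul, monomial_mul, one_mul, one_mul]
  congr 1
  rw [tsub_tsub, add_tsub_cancel_of_le]
  rw [Finsupp.le_def]
  intro i
  fin_cases i <;> simp [Finsupp.single_apply] <;> omega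

/-- If p₂ⁿ·P₁ − p₁ⁿ·P₂ = (p·q)·Q then Q = Σ_{j=0}^{n} p₁^{n−j} p₂^{j} Q_j. -/
theorem Q_decomposition (P₁ P₂ Q : MvPolynomial (Fin 6) ℂ) (n : ℕ) (hn : 1 ≤ n)
    (h : (X 1) ^ n * P₁ - (X 0) ^ n * P₂ = pqPoly * Q) :
    ∃ Qc : Fin (n + 1) → MvPolynomial (Fin 6) ℂ,
      Q = ∑ j : Fin (n + 1), (X 0) ^ (n - (j : ℕ)) * (X 1) ^ (j : ℕ) * Qc j := by
  classical
  have hx : ∀ i : Fin 6, (X i : MvPolynomial (Fin 6) ℂ) = monomial (Finsupp.single i 1) 1 :=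
    fun i => by rw [← X_pow_eq_monomial, pow_one]
  have h' : (X 1 : MvPolynomial (Fin 6) ℂ) ^ n * P₁ - X 0 ^ n * P₂
      = X 0 * X 3 * Q + X 1 * X 4 * Q + X 2 * X 5 * Q := by
    rw [h, pqPoly]; ring
  have key : ∀ k : ℕ, ∀ d : Fin 6 →₀ ℕ, d 0 + d 1 = k → k < n → coeff d Q = 0 := by
    intro k
    induction k using Nat.strong_induction_on with
    | _ k IH =>
      intro d hd hk
      set d' : Fin 6 →₀ ℕ := d + Finsupp.single 2 1 + Finsupp.single 5 1 with hd'
      have h0' : d' 0 = d 0 := by simp [hd', Finsupp.single_apply]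
      have h1' : d' 1 = d 1 := by simp [hd', Finsupp.single_apply]
      have hc := congrArg (coeff d') h'
      have e1 : coeff d' ((X 1 : MvPolynomial (Fin 6) ℂ) ^ n * P₁) = 0 := by
        rw [X_pow_eq_monomial, coeff_monomial_mul', if_neg]
        rw [Finsupp.single_le_iff, h1']
        omega
      have e2 : coeff d' ((X 0 : MvPolynomial (Fin 6) ℂ) ^ n * P₂) = 0 := by
        rw [X_pow_eq_monomial, coeff_monomial_mul', if_neg]
        rw [Finsupp.single_le_iff, h0']
        omega
      have e3 : coeff d' ((X 0 : MvPolynomial (Fin 6) ℂ) * X 3 * Q) = 0 := by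
        rw [hx 0, hx 3, monomial_mul, one_mul, coeff_monomial_mul']
        by_cases hle : Finsupp.single (0 : Fin 6) 1 + Finsupp.single 3 1 ≤ d'
        · rw [if_pos hle, one_mul]
          have hd0 : 1 ≤ d 0 := by
            have := (Finsupp.le_def.1 hle) 0
            simpa [h0', Finsupp.single_apply] using this
          have ha : ((d' - (Finsupp.single (0 : Fin 6) 1 + Finsupp.single 3 1) : Fin 6 →₀ ℕ)) 0 = d 0 - 1 := by
            simp [Finsupp.tsub_apply, h0', Finsupp.single_apply]
          have hb : ((d' - (Finsupp.single (0 : Fin 6) 1 + Finsupp.single 3 1) : Fin 6 →₀ ℕ)) 1 = d 1 := by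
            simp [Finsupp.tsub_apply, h1', Finsupp.single_apply]
          exact IH _ (by rw [ha, hb]; omega) _ rfl (by rw [ha, hb]; omega)
        · rw [if_neg hle]
      have e4 : coeff d' ((X 1 : MvPolynomial (Fin 6) ℂ) * X 4 * Q) = 0 := by
        rw [hx 1, hx 4, monomial_mul, one_mul, coeff_monomial_mul']
        by_cases hle : Finsupp.single (1 : Fin 6) 1 + Finsupp.single 4 1 ≤ d'
        · rw [if_pos hle, one_mul]
          have hd1 : 1 ≤ d 1 := by
            have := (Finsupp.le_def.1 hle) 1
            simpa [h1', Finsupp.single_apply] using this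
          have ha : ((d' - (Finsupp.single (1 : Fin 6) 1 + Finsupp.single 4 1) : Fin 6 →₀ ℕ)) 0 = d 0 := by
            simp [Finsupp.tsub_apply, h0', Finsupp.single_apply]
          have hb : ((d' - (Finsupp.single (1 : Fin 6) 1 + Finsupp.single 4 1) : Fin 6 →₀ ℕ)) 1 = d 1 - 1 := by
            simp [Finsupp.tsub_apply, h1', Finsupp.single_apply]
          exact IH _ (by rw [ha, hb]; omega) _ rfl (by rw [ha, hb]; omega)
        · rw [if_neg hle]
      have e5 : coeff d' ((X 2 : MvPolynomial (Fin 6) ℂ) * X 5 * Q) = coeff d Q := by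
        rw [hx 2, hx 5, monomial_mul, one_mul, coeff_monomial_mul', if_pos, one_mul]
        · congr 1
          rw [hd', add_assoc, add_tsub_cancel_right]
        · rw [hd', add_assoc]
          exact le_add_self
      rw [coeff_sub, coeff_add, coeff_add, e1, e2, e3, e4, e5] at hc
      simpa using hc.symm
  have hQsupp : ∀ d ∈ Q.support, n ≤ d 0 + d 1 := by
    intro d hd
    by_contra hlt
    push_neg at hlt
    exact (mem_support_iff.1 hd) (key _ d rfl hlt)
  set jm : (Fin 6 →₀ ℕ) → Fin (n + 1) := fun d => ⟨min (d 1) n, by omega⟩ with hjm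
  refine ⟨fun j => ∑ d ∈ Q.support.filter (fun d => jm d = j),
      monomial (d - Finsupp.single 0 (n - min (d 1) n) - Finsupp.single 1 (min (d 1) n))
        (coeff d Q), ?_⟩
  symm
  calc ∑ j : Fin (n + 1), (X 0 : MvPolynomial (Fin 6) ℂ) ^ (n - (j : ℕ)) * X 1 ^ (j : ℕ) *
        ∑ d ∈ Q.support.filter (fun d => jm d = j),
          monomial (d - Finsupp.single 0 (n - min (d 1) n) - Finsupp.single 1 (min (d 1) n))
            (coeff d Q)
      = ∑ j : Fin (n + 1), ∑ d ∈ Q.support.filter (fun d => jm d = j),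
          monomial d (coeff d Q) := by
        refine Finset.sum_congr rfl fun j _ => ?_
        rw [Finset.mul_sum]
        refine Finset.sum_congr rfl fun d hd => ?_
        obtain ⟨hds, hjd⟩ := Finset.mem_filter.1 hd
        subst hjd
        have hcast : ((jm d : Fin (n + 1)) : ℕ) = min (d 1) n := rfl
        rw [hcast]
        exact mono_decomp n _ d _ (min_le_left _ _) (by have := hQsupp d hds; omega)
    _ = ∑ d ∈ Q.support, monomial d (coeff d Q) :=
        Finset.sum_fiberwise_of_maps_to (fun d _ => Finset.mem_univ _) _
    _ = Q := support_sum_monomial_coeff Q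
end

section
/- Suppose P₁, P₂ are polynomials in p,q with p₂ⁿ P₁ − p₁ⁿ P₂ ∈ (pq), where (pq) is the ideal generated by p₁q₁+p₂q₂+p₃q₃ and n ≥ 1. Then there exist polynomials P₁', P₂' and elements s₁, s₂ ∈ (pq) such that P₁ = p₁ P₁' + s₁, P₂ = p₂ P₂' + s₂ and p₂^{n−1} P₁' − p₁^{n−1} P₂' ∈ (pq). -/
open MvPolynomial

noncomputable def phi (i : Fin 6) : MvPolynomial (Fin 6) ℂ →ₐ[ℂ] MvPolynomial (Fin 6) ℂ :=
  aeval (fun j => if j = i then 0 else X j)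

@[simp] lemma phi_X (i j : Fin 6) : phi i (X j) = if j = i then 0 else X j := by
  simp [phi]

lemma X_dvd_sub_phi (i : Fin 6) (f : MvPolynomial (Fin 6) ℂ) : X i ∣ f - phi i f := by
  induction f using MvPolynomial.induction_on with
  | C a => simp [phi]
  | add f g hf hg =>
      have : f + g - phi i (f + g) = (f - phi i f) + (g - phi i g) := by
        rw [map_add]; ring
      rw [this]; exact dvd_add hf hg
  | mul_X f j hf =>
      rw [map_mul, phi_X]
      by_cases hj : j = i
      · subst hj; simp
      · rw [if_neg hj]
        have : f * X j - phi i f * X j = (f - phi i f) * X j := by ring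
        rw [this]
        exact Dvd.dvd.mul_right hf _

lemma phi_eq_zero_of_X_dvd {i : Fin 6} {f : MvPolynomial (Fin 6) ℂ} (h : X i ∣ f) :
    phi i f = 0 := by
  obtain ⟨g, rfl⟩ := h
  simp

lemma X_dvd_iff_phi {i : Fin 6} {f : MvPolynomial (Fin 6) ℂ} :
    X i ∣ f ↔ phi i f = 0 := by
  constructor
  · exact phi_eq_zero_of_X_dvd
  · intro h
    have := X_dvd_sub_phi i f
    rwa [h, sub_zero] at this

lemma phi_idem (i : Fin 6) (f : MvPolynomial (Fin 6) ℂ) : phi i (phi i f) = phi i f := by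
  induction f using MvPolynomial.induction_on with
  | C a => simp [phi]
  | add f g hf hg => simp [map_add, hf, hg]
  | mul_X f j hf =>
      rw [map_mul, map_mul, hf, phi_X]
      by_cases hj : j = i
      · simp [hj]
      · simp [hj]

lemma prime_X' (i : Fin 6) : Prime (X i : MvPolynomial (Fin 6) ℂ) := by
  refine ⟨X_ne_zero i, ?_, ?_⟩
  · intro hu
    have h2 := hu.map (phi i)
    rw [phi_X, if_pos rfl] at h2
    exact not_isUnit_zero h2
  · intro a b hab
    rw [X_dvd_iff_phi] at hab ⊢
    rw [X_dvd_iff_phi (f := b)]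
    rw [map_mul] at hab
    exact mul_eq_zero.mp hab

lemma phi0_pq : phi 0 pqPoly = X 1 * X 4 + X 2 * X 5 := by
  simp [pqPoly]

lemma phi1_pq : phi 1 pqPoly = X 0 * X 3 + X 2 * X 5 := by
  simp [pqPoly]

lemma m1_ne : (X 1 * X 4 + X 2 * X 5 : MvPolynomial (Fin 6) ℂ) ≠ 0 := by
  intro hz
  have : phi 1 (X 1 * X 4 + X 2 * X 5 : MvPolynomial (Fin 6) ℂ) = 0 := by rw [hz, map_zero]
  simp at this

lemma m2_ne : (X 0 * X 3 + X 2 * X 5 : MvPolynomial (Fin 6) ℂ) ≠ 0 := by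
  intro hz
  have : phi 0 (X 0 * X 3 + X 2 * X 5 : MvPolynomial (Fin 6) ℂ) = 0 := by rw [hz, map_zero]
  simp at this

lemma X1_not_dvd_m1 : ¬ (X 1 : MvPolynomial (Fin 6) ℂ) ∣ (X 1 * X 4 + X 2 * X 5) := by
  rw [X_dvd_iff_phi]
  intro hz
  simp at hz

lemma X0_not_dvd_m2 : ¬ (X 0 : MvPolynomial (Fin 6) ℂ) ∣ (X 0 * X 3 + X 2 * X 5) := by
  rw [X_dvd_iff_phi]
  intro hz
  simp at hz

lemma X0_not_dvd_pq : ¬ (X 0 : MvPolynomial (Fin 6) ℂ) ∣ pqPoly := by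
  rw [X_dvd_iff_phi, phi0_pq]
  exact m1_ne

lemma X1_not_dvd_pq : ¬ (X 1 : MvPolynomial (Fin 6) ℂ) ∣ pqPoly := by
  rw [X_dvd_iff_phi, phi1_pq]
  exact m2_ne

/-- Inductive descent step: from p₂ⁿ P₁ − p₁ⁿ P₂ ∈ (pq) one can write
P₁ = p₁ P₁' + s₁, P₂ = p₂ P₂' + s₂ with s₁,s₂ ∈ (pq) and
p₂^{n−1} P₁' − p₁^{n−1} P₂' ∈ (pq). -/
theorem descent_step (P₁ P₂ : MvPolynomial (Fin 6) ℂ) (n : ℕ) (hn : 1 ≤ n)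
    (h : (X 1) ^ n * P₁ - (X 0) ^ n * P₂ ∈ Ideal.span {pqPoly}) :
    ∃ P₁' P₂' s₁ s₂ : MvPolynomial (Fin 6) ℂ,
      s₁ ∈ Ideal.span {pqPoly} ∧ s₂ ∈ Ideal.span {pqPoly} ∧
      P₁ = X 0 * P₁' + s₁ ∧ P₂ = X 1 * P₂' + s₂ ∧
      (X 1) ^ (n - 1) * P₁' - (X 0) ^ (n - 1) * P₂' ∈ Ideal.span {pqPoly} := by
  obtain ⟨m, rfl⟩ : ∃ m, n = m + 1 := ⟨n - 1, (Nat.succ_pred_eq_of_pos hn).symm⟩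
  obtain ⟨c, hc⟩ := (Ideal.mem_span_singleton).mp h
  set M1 : MvPolynomial (Fin 6) ℂ := X 1 * X 4 + X 2 * X 5 with hM1
  set M2 : MvPolynomial (Fin 6) ℂ := X 0 * X 3 + X 2 * X 5 with hM2
  -- Part 1
  have h0 : X 1 ^ (m+1) * phi 0 P₁ = M1 * phi 0 c := by
    have := congrArg (phi 0) hc
    simp only [map_sub, map_mul, map_pow, phi_X, phi0_pq] at this
    norm_num at this
    simpa [hM1] using this
  have hdvd1 : (X 1 : MvPolynomial (Fin 6) ℂ) ^ (m+1) ∣ phi 0 c :=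
    (prime_X' 1).pow_dvd_of_dvd_mul_left (m+1) X1_not_dvd_m1 ⟨phi 0 P₁, h0.symm⟩
  obtain ⟨d, hd⟩ := hdvd1
  set d' : MvPolynomial (Fin 6) ℂ := phi 0 d with hd'
  have hd2 : phi 0 c = X 1 ^ (m+1) * d' := by
    have := congrArg (phi 0) hd
    rw [phi_idem] at this
    simpa [hd'] using this
  have hP1phi : phi 0 P₁ = M1 * d' := by
    apply mul_left_cancel₀ (pow_ne_zero (m+1) (X_ne_zero 1))
    rw [h0, hd2]; ring
  have hX0dvd : (X 0 : MvPolynomial (Fin 6) ℂ) ∣ P₁ - d' * pqPoly := by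
    rw [X_dvd_iff_phi, map_sub, map_mul, phi0_pq, hP1phi, hd', phi_idem]
    ring
  obtain ⟨P₁', hP₁'⟩ := hX0dvd
  -- Part 2
  have h1 : X 0 ^ (m+1) * phi 1 P₂ = M2 * (- phi 1 c) := by
    have := congrArg (phi 1) hc
    simp only [map_sub, map_mul, map_pow, phi_X, phi1_pq] at this
    norm_num at this
    rw [hM2]
    linear_combination -this
  have hdvd2 : (X 0 : MvPolynomial (Fin 6) ℂ) ^ (m+1) ∣ (- phi 1 c) :=
    (prime_X' 0).pow_dvd_of_dvd_mul_left (m+1) X0_not_dvd_m2 ⟨phi 1 P₂, h1.symm⟩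
  obtain ⟨e, he⟩ := hdvd2
  set e' : MvPolynomial (Fin 6) ℂ := phi 1 e with he'
  have he2 : - phi 1 c = X 0 ^ (m+1) * e' := by
    have := congrArg (phi 1) he
    rw [map_neg, phi_idem] at this
    simpa [he'] using this
  have hP2phi : phi 1 P₂ = M2 * e' := by
    apply mul_left_cancel₀ (pow_ne_zero (m+1) (X_ne_zero 0))
    rw [h1, he2]; ring
  have hX1dvd : (X 1 : MvPolynomial (Fin 6) ℂ) ∣ P₂ - e' * pqPoly := by
    rw [X_dvd_iff_phi, map_sub, map_mul, phi1_pq, hP2phi, he', phi_idem]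
    ring
  obtain ⟨P₂', hP₂'⟩ := hX1dvd
  -- Part 3
  have key : X 0 * (X 1 * (X 1 ^ m * P₁' - X 0 ^ m * P₂'))
      = pqPoly * (c - X 1 ^ (m+1) * d' + X 0 ^ (m+1) * e') := by
    have e1 : X 0 * P₁' = P₁ - d' * pqPoly := hP₁'.symm
    have e2 : X 1 * P₂' = P₂ - e' * pqPoly := hP₂'.symm
    linear_combination hc + X 1 ^ (m+1) * e1 - X 0 ^ (m+1) * e2
  have hd3 : (X 0 : MvPolynomial (Fin 6) ℂ) ∣ (c - X 1 ^ (m+1) * d' + X 0 ^ (m+1) * e') := by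
    have : (X 0 : MvPolynomial (Fin 6) ℂ) ∣ pqPoly * (c - X 1 ^ (m+1) * d' + X 0 ^ (m+1) * e') :=
      ⟨X 1 * (X 1 ^ m * P₁' - X 0 ^ m * P₂'), key.symm⟩
    exact ((prime_X' 0).dvd_or_dvd this).resolve_left X0_not_dvd_pq
  obtain ⟨e₁, he₁⟩ := hd3
  have key2 : X 1 * (X 1 ^ m * P₁' - X 0 ^ m * P₂') = pqPoly * e₁ := by
    apply mul_left_cancel₀ (X_ne_zero 0)
    rw [key, he₁]; ring
  have hd4 : (X 1 : MvPolynomial (Fin 6) ℂ) ∣ e₁ := by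
    have : (X 1 : MvPolynomial (Fin 6) ℂ) ∣ pqPoly * e₁ :=
      ⟨X 1 ^ m * P₁' - X 0 ^ m * P₂', key2.symm⟩
    exact ((prime_X' 1).dvd_or_dvd this).resolve_left X1_not_dvd_pq
  obtain ⟨e₂, he₂⟩ := hd4
  have key3 : X 1 ^ m * P₁' - X 0 ^ m * P₂' = pqPoly * e₂ := by
    apply mul_left_cancel₀ (X_ne_zero 1)
    rw [key2, he₂]; ring
  refine ⟨P₁', P₂', d' * pqPoly, e' * pqPoly, ?_, ?_, ?_, ?_, ?_⟩
  · exact Ideal.mem_span_singleton.mpr ⟨d', mul_comm _ _⟩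
  · exact Ideal.mem_span_singleton.mpr ⟨e', mul_comm _ _⟩
  · linear_combination hP₁'
  · linear_combination hP₂'
  · simp only [Nat.add_sub_cancel]
    exact Ideal.mem_span_singleton.mpr ⟨e₂, key3⟩
end

section
/- A rational function f on the variety V = {(p,q) ∈ ℂ³×ℂ³ : p·q = 0} which can be written as f = P₁/p₁ⁿ on {p₁ ≠ 0} and f = P₂/p₂ⁿ on {p₂ ≠ 0} and f = P₃/p₃ⁿ on {p₃ ≠ 0}, where each Pᵢ is a polynomial, coincides on V∖{p=0} with a polynomial function in p and q. -/
open MvPolynomial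

/-!
Let A = ℂ[p, q]/(p·q) be the coordinate ring of V; it is a domain because p·q is linear in
p₁ with coprime coefficients q₁ and p₂q₂ + p₃q₃. Where two of the quotients Pᵢ/pᵢⁿ are
defined they agree, so pⱼpᵢ(pⱼⁿPᵢ - pᵢⁿPⱼ) vanishes on V and, by the Nullstellensatz,
pⱼⁿPᵢ = pᵢⁿPⱼ in A. Now A/(p₁) = ℂ[p, q]/(p₁, p₂q₂ + p₃q₃) is again a domain, so p₁ is prime
in A and does not divide p₂; from p₂ⁿP₁ = p₁ⁿP₂ we get P₁ = p₁ⁿP for some P ∈ A, and then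
Pⱼ = pⱼⁿP for every j, i.e. f = P wherever some pⱼ ≠ 0.
-/

theorem not_dvd_of_map_eq_zero {A B F : Type*} [CommMonoidWithZero A] [CommMonoidWithZero B]
    [FunLike F A B] [MonoidWithZeroHomClass F A B] (φ : F) {x y : A}
    (hx : φ x = 0) (hy : φ y ≠ 0) : ¬ x ∣ y :=
  fun h ↦ hy (zero_dvd_iff.mp (hx ▸ map_dvd φ h))

theorem exists_common_numerator {R : Type*} [CommRing R] [IsDomain R] {n : ℕ}
    {x₀ x₁ x₂ a₀ a₁ a₂ : R} (hx₀ : Prime x₀) (hx₁ : ¬ x₀ ∣ x₁)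
    (h₁ : x₁ ^ n * a₀ = x₀ ^ n * a₁) (h₂ : x₂ ^ n * a₀ = x₀ ^ n * a₂) :
    ∃ b, a₀ = x₀ ^ n * b ∧ a₁ = x₁ ^ n * b ∧ a₂ = x₂ ^ n * b := by
  obtain ⟨b, hb⟩ : x₀ ^ n ∣ a₀ :=
    hx₀.pow_dvd_of_dvd_mul_left n (fun h ↦ hx₁ (hx₀.dvd_of_dvd_pow h)) ⟨a₁, h₁⟩
  have cancel : ∀ {x a : R}, x ^ n * a₀ = x₀ ^ n * a → a = x ^ n * b := fun h ↦
    mul_left_cancel₀ (pow_ne_zero n hx₀.ne_zero) (by rw [← h, hb]; ring)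
  exact ⟨b, hb, cancel h₁, cancel h₂⟩

theorem Ideal.Quotient.prime_mk_of_isPrime_span_pair {A : Type*} [CommRing A] {x g : A}
    (h : (Ideal.span {x, g}).IsPrime) (hx : x ∉ Ideal.span {g}) :
    Prime (Ideal.Quotient.mk (Ideal.span {g}) x) := by
  have hx0 : Ideal.Quotient.mk (Ideal.span {g}) x ≠ 0 := by
    rwa [Ne, Ideal.Quotient.eq_zero_iff_mem]
  have hmap : (Ideal.span {x, g}).map (Ideal.Quotient.mk (Ideal.span {g})) =
      Ideal.span {Ideal.Quotient.mk (Ideal.span {g}) x} := by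
    rw [Ideal.map_span, Set.image_pair, Ideal.Quotient.mk_singleton_self, Set.pair_comm,
      Ideal.span_insert_zero]
  rw [← Ideal.span_singleton_prime hx0, ← hmap]
  refine Ideal.map_isPrime_of_surjective Ideal.Quotient.mk_surjective ?_
  rw [Ideal.mk_ker]
  exact Ideal.span_mono (by simp)

namespace Polynomial

theorem isPrime_span_X_C_mul_X_add_C {A : Type*} [CommRing A] {a b : A} (hb : Prime b) :
    (Ideal.span {X, C a * X + C b} : Ideal A[X]).IsPrime := by
  have := (Ideal.span_singleton_prime hb.ne_zero).mpr hb
  suffices Ideal.span {X, C a * X + C b} =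
      RingHom.ker ((Ideal.Quotient.mk (Ideal.span {b})).comp constantCoeff) by
    rw [this]; exact RingHom.ker_isPrime _
  refine le_antisymm (Ideal.span_le.mpr ?_) fun p hp ↦ ?_
  · rintro _ (rfl | rfl) <;> simp [Ideal.Quotient.mk_singleton_self]
  · obtain ⟨c, hc⟩ := Ideal.mem_span_singleton'.mp
      (Ideal.Quotient.eq_zero_iff_mem.mp (RingHom.mem_ker.mp hp))
    obtain ⟨q, hq⟩ := X_dvd_sub_C (p := p)
    refine Ideal.mem_span_pair.mpr ⟨q - C a * C c, C c, ?_⟩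
    have hcb : C c * C b = C (p.coeff 0) := by rw [← C_mul, hc, constantCoeff_apply]
    linear_combination hcb - hq

end Polynomial

namespace MvPolynomial

section FinSuccEquiv

variable {R : Type*} [CommRing R] {m : ℕ} {F : MvPolynomial (Fin (m + 1)) R}
  {a b : MvPolynomial (Fin m) R}

theorem prime_of_finSuccEquiv_eq [IsDomain R] [UniqueFactorizationMonoid R]
    (hF : finSuccEquiv R m F = .C a * .X + .C b) (ha : a ≠ 0) (hab : IsRelPrime a b) :
    Prime F := by
  refine (MulEquiv.prime_iff (finSuccEquiv R m).toMulEquiv).mp ?_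
  change Prime (finSuccEquiv R m F)
  rw [hF]
  exact (Polynomial.irreducible_C_mul_X_add_C ha hab).prime

theorem isPrime_span_X_zero_of_finSuccEquiv_eq
    (hF : finSuccEquiv R m F = .C a * .X + .C b) (hb : Prime b) :
    (Ideal.span {X 0, F}).IsPrime := by
  have := Polynomial.isPrime_span_X_C_mul_X_add_C (a := a) hb
  have hmap : (Ideal.span {.X, .C a * .X + .C b}).map (finSuccEquiv R m).symm =
      Ideal.span {X 0, F} := by
    rw [Ideal.map_span, Set.image_pair, ← hF, ← finSuccEquiv_X_zero, AlgEquiv.symm_apply_apply,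
      AlgEquiv.symm_apply_apply]
  rw [← hmap]
  exact Ideal.map_isPrime_of_equiv _

end FinSuccEquiv

section Nullstellensatz

variable {σ K : Type*} [Field K] {g : MvPolynomial σ K}

noncomputable def quotientEval (v : σ → K) (hv : eval v g = 0) :
    MvPolynomial σ K ⧸ Ideal.span {g} →+* K :=
  Ideal.Quotient.lift _ (eval v) fun _ ha ↦ by
    obtain ⟨c, rfl⟩ := Ideal.mem_span_singleton'.mp ha
    rw [map_mul, hv, mul_zero]

@[simp]
theorem quotientEval_mk (v : σ → K) (hv : eval v g = 0) (F : MvPolynomial σ K) :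
    quotientEval v hv (Ideal.Quotient.mk _ F) = eval v F :=
  rfl

theorem eq_eval_of_mk_eq {f : (σ → K) → K} {n : ℕ} {j : σ} {Pj P : MvPolynomial σ K}
    (h : Ideal.Quotient.mk (Ideal.span {g}) Pj = Ideal.Quotient.mk _ (X j ^ n * P))
    (hPj : ∀ v, eval v g = 0 → v j ≠ 0 → f v = eval v Pj / v j ^ n) (v : σ → K)
    (hv : eval v g = 0) (hvj : v j ≠ 0) : f v = eval v P := by
  have h := congrArg (quotientEval v hv) h
  simp only [quotientEval_mk, map_mul, map_pow, eval_X] at h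
  rw [hPj v hv hvj, h, mul_div_cancel_left₀ _ (pow_ne_zero _ hvj)]

variable [IsAlgClosed K] [Finite σ]

theorem dvd_of_forall_eval_eq_zero (hg : Prime g) {F : MvPolynomial σ K}
    (hF : ∀ v, eval v g = 0 → eval v F = 0) : g ∣ F := by
  have hI := (Ideal.span_singleton_prime hg.ne_zero).mpr hg
  rw [← Ideal.mem_span_singleton, ← hI.radical, ← vanishingIdeal_zeroLocus_eq_radical (K := K)]
  intro v hv
  simpa using hF v (by simpa using hv g (Ideal.mem_span_singleton_self g))

theorem mk_pow_mul_eq_of_eq_div (hg : Prime g) {i j : σ} (hi : ¬ g ∣ X i) (hj : ¬ g ∣ X j)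
    {f : (σ → K) → K} {n : ℕ} {Pi Pj : MvPolynomial σ K}
    (hPi : ∀ v, eval v g = 0 → v i ≠ 0 → f v = eval v Pi / v i ^ n)
    (hPj : ∀ v, eval v g = 0 → v j ≠ 0 → f v = eval v Pj / v j ^ n) :
    Ideal.Quotient.mk (Ideal.span {g}) (X j ^ n * Pi) =
      Ideal.Quotient.mk (Ideal.span {g}) (X i ^ n * Pj) := by
  rw [Ideal.Quotient.eq, Ideal.mem_span_singleton]
  have hdvd : g ∣ X i * X j * (X j ^ n * Pi - X i ^ n * Pj) := by
    refine dvd_of_forall_eval_eq_zero hg fun v hv ↦ ?_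
    by_cases hvi : v i = 0
    · simp [hvi]
    by_cases hvj : v j = 0
    · simp [hvj]
    have h := (hPi v hv hvi).symm.trans (hPj v hv hvj)
    rw [div_eq_div_iff (pow_ne_zero _ hvi) (pow_ne_zero _ hvj)] at h
    simp only [map_mul, map_sub, map_pow, eval_X]
    linear_combination (v i * v j) * h
  exact (hg.dvd_or_dvd hdvd).resolve_left fun h ↦ (hg.dvd_or_dvd h).elim hi hj

end Nullstellensatz

end MvPolynomial

theorem prime_X_zero_mul_X_three_add_X_one_mul_X_four {R : Type*} [CommRing R] [IsDomain R]
    [UniqueFactorizationMonoid R] : Prime (X 0 * X 3 + X 1 * X 4 : MvPolynomial (Fin 5) R) := by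
  have hF : finSuccEquiv R 4 (X 0 * X 3 + X 1 * X 4) = .C (X 2) * .X + .C (X 0 * X 3) := by
    change finSuccEquiv R 4 (X 0 * X (Fin.succ 2) + X (Fin.succ 0) * X (Fin.succ 3)) = _
    simp only [map_add, map_mul, finSuccEquiv_X_zero, finSuccEquiv_X_succ]
    ring
  refine prime_of_finSuccEquiv_eq hF (X_ne_zero 2)
    (X_prime.irreducible.isRelPrime_iff_not_dvd.mpr ?_)
  exact not_dvd_of_map_eq_zero (eval ![1, 1, 0, 1]) (by simp) (by simp)

theorem finSuccEquiv_pqPoly :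
    finSuccEquiv ℂ 5 pqPoly = .C (X 2) * .X + .C (X 0 * X 3 + X 1 * X 4) := by
  change finSuccEquiv ℂ 5 (X 0 * X (Fin.succ 2) + X (Fin.succ 0) * X (Fin.succ 3) +
    X (Fin.succ 1) * X (Fin.succ 4)) = _
  simp only [map_add, map_mul, finSuccEquiv_X_zero, finSuccEquiv_X_succ]
  ring

theorem prime_pqPoly : Prime pqPoly := by
  refine prime_of_finSuccEquiv_eq finSuccEquiv_pqPoly (X_ne_zero 2)
    (X_prime.irreducible.isRelPrime_iff_not_dvd.mpr ?_)
  exact not_dvd_of_map_eq_zero (eval ![1, 0, 0, 1, 0]) (by simp) (by simp)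

instance isPrime_span_pqPoly : (Ideal.span {pqPoly}).IsPrime :=
  (Ideal.span_singleton_prime prime_pqPoly.ne_zero).mpr prime_pqPoly

theorem isPrime_span_X_zero_pqPoly : (Ideal.span {X 0, pqPoly}).IsPrime :=
  isPrime_span_X_zero_of_finSuccEquiv_eq finSuccEquiv_pqPoly
    prime_X_zero_mul_X_three_add_X_one_mul_X_four

theorem eval_single_pqPoly {i : Fin 6} (hi : (i : ℕ) < 3) : eval (Pi.single i 1) pqPoly = 0 := by
  fin_cases i <;> simp_all [pqPoly]

theorem pqPoly_not_dvd_X {i : Fin 6} (hi : (i : ℕ) < 3) : ¬ pqPoly ∣ X i :=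
  not_dvd_of_map_eq_zero (eval (Pi.single i 1)) (eval_single_pqPoly hi) (by simp)

theorem prime_mk_X_zero : Prime (Ideal.Quotient.mk (Ideal.span {pqPoly}) (X 0)) :=
  Ideal.Quotient.prime_mk_of_isPrime_span_pair isPrime_span_X_zero_pqPoly
    (by rw [Ideal.mem_span_singleton]; exact pqPoly_not_dvd_X (by decide))

theorem mk_X_zero_not_dvd_mk_X_one :
    ¬ Ideal.Quotient.mk (Ideal.span {pqPoly}) (X 0) ∣ Ideal.Quotient.mk _ (X 1) :=
  not_dvd_of_map_eq_zero (quotientEval _ (eval_single_pqPoly (i := 1) (by decide)))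
    (by simp) (by simp)

/-- Points of ℂ⁶ are `v : Fin 6 → ℂ` with p = (v 0, v 1, v 2) and q = (v 3, v 4, v 5). -/
theorem extends_to_polynomial (f : (Fin 6 → ℂ) → ℂ) (n : ℕ)
    (P₁ P₂ P₃ : MvPolynomial (Fin 6) ℂ)
    (h1 : ∀ v : Fin 6 → ℂ, eval v pqPoly = 0 → v 0 ≠ 0 → f v = eval v P₁ / (v 0) ^ n)
    (h2 : ∀ v : Fin 6 → ℂ, eval v pqPoly = 0 → v 1 ≠ 0 → f v = eval v P₂ / (v 1) ^ n)
    (h3 : ∀ v : Fin 6 → ℂ, eval v pqPoly = 0 → v 2 ≠ 0 → f v = eval v P₃ / (v 2) ^ n) :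
    ∃ P : MvPolynomial (Fin 6) ℂ,
      ∀ v : Fin 6 → ℂ, eval v pqPoly = 0 → (v 0 ≠ 0 ∨ v 1 ≠ 0 ∨ v 2 ≠ 0) →
        f v = eval v P := by
  have h12 := mk_pow_mul_eq_of_eq_div prime_pqPoly (pqPoly_not_dvd_X (i := 0) (by decide))
    (pqPoly_not_dvd_X (i := 1) (by decide)) h1 h2
  have h13 := mk_pow_mul_eq_of_eq_div prime_pqPoly (pqPoly_not_dvd_X (i := 0) (by decide))
    (pqPoly_not_dvd_X (i := 2) (by decide)) h1 h3
  simp only [map_mul, map_pow] at h12 h13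
  obtain ⟨b, hb₁, hb₂, hb₃⟩ :=
    exists_common_numerator prime_mk_X_zero mk_X_zero_not_dvd_mk_X_one h12 h13
  obtain ⟨P, rfl⟩ := Ideal.Quotient.mk_surjective b
  refine ⟨P, fun v hv hp ↦ ?_⟩
  rcases hp with hp | hp | hp
  · exact eq_eval_of_mk_eq (by simpa using hb₁) h1 v hv hp
  · exact eq_eval_of_mk_eq (by simpa using hb₂) h2 v hv hp
  · exact eq_eval_of_mk_eq (by simpa using hb₃) h3 v hv hp
end

section
/- The set G/U = {(p,q) ∈ (ℂ³∖{0}) × (ℂ³∖{0}) : p₁q₁+p₂q₂+p₃q₃ = 0} is exactly the image of SL(3,ℂ) under the map g ↦ (p(g), q(g)), where p(g) is the first column of g and q(g) is the vector of 2×2 cofactors (q₁, q₂, q₃) = (x₂y₃−x₃y₂, x₃y₁−x₁y₃, x₁y₂−x₂y₁) built from the first two columns (x, y) of g. -/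
open Matrix

/-- First column of g. -/
def pVec (g : Matrix (Fin 3) (Fin 3) ℂ) : Fin 3 → ℂ := fun i => g i 0

/-- Vector of 2×2 cofactors of the first two columns x, y of g:
(q₁,q₂,q₃) = (x₂y₃−x₃y₂, x₃y₁−x₁y₃, x₁y₂−x₂y₁). -/
def qVec (g : Matrix (Fin 3) (Fin 3) ℂ) : Fin 3 → ℂ :=
  ![g 1 0 * g 2 1 - g 2 0 * g 1 1,
    g 2 0 * g 0 1 - g 0 0 * g 2 1,
    g 0 0 * g 1 1 - g 1 0 * g 0 1]

/-! For `g ∈ SL(3, ℂ)` with columns `x, y, z` we have `q = x ⨯₃ y` and `1 = det g = q ⬝ᵥ z`, so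
`q ≠ 0`, hence `p = x ≠ 0`, and `p ⬝ᵥ q = 0`. Conversely, given such `(p, q)`, choose `w` with
`p ⬝ᵥ w = 1`; the expansion `p ⨯₃ (q ⨯₃ w) = (p ⬝ᵥ w) • q - (q ⬝ᵥ p) • w = q` shows `y := q ⨯₃ w`
works as second column, and any `z` with `q ⬝ᵥ z = 1` completes `(p, y, z)` to a matrix of
determinant one. -/

theorem exists_dotProduct_eq_one {n K : Type*} [Fintype n] [DecidableEq n] [DivisionSemiring K]
    {v : n → K} (hv : v ≠ 0) : ∃ w, v ⬝ᵥ w = 1 := by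
  obtain ⟨i, hi⟩ := Function.ne_iff.mp hv
  exact ⟨Pi.single i (v i)⁻¹, by rw [dotProduct_single, mul_inv_cancel₀ hi]⟩

theorem det_eq_cross_dotProduct {R : Type*} [CommRing R] (A : Matrix (Fin 3) (Fin 3) R) :
    A.det = (A 0 ⨯₃ A 1) ⬝ᵥ A 2 := by
  rw [dotProduct_comm, ← triple_product_permutation, ← triple_product_permutation,
    triple_product_eq_det]
  congr 1
  ext i j
  fin_cases i <;> rfl

theorem exists_cross_eq_of_dotProduct_eq_zero {K : Type*} [Field K] {p q : Fin 3 → K}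
    (hp : p ≠ 0) (hpq : p ⬝ᵥ q = 0) : ∃ y, p ⨯₃ y = q := by
  obtain ⟨w, hw⟩ := exists_dotProduct_eq_one hp
  refine ⟨q ⨯₃ w, ?_⟩
  rw [cross_cross_eq_smul_sub_smul', hw, dotProduct_comm, hpq, one_smul, zero_smul, sub_zero]

theorem pVec_eq_transpose (g : Matrix (Fin 3) (Fin 3) ℂ) : pVec g = gᵀ 0 := rfl

theorem qVec_eq_cross (g : Matrix (Fin 3) (Fin 3) ℂ) : qVec g = gᵀ 0 ⨯₃ gᵀ 1 := rfl

theorem det_eq_qVec_dotProduct (g : Matrix (Fin 3) (Fin 3) ℂ) : g.det = qVec g ⬝ᵥ gᵀ 2 := by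
  rw [← det_transpose, det_eq_cross_dotProduct, qVec_eq_cross]

theorem qVec_ne_zero (g : SpecialLinearGroup (Fin 3) ℂ) : qVec g ≠ 0 := by
  intro h
  have hdet := det_eq_qVec_dotProduct g
  rw [g.det_coe, h, zero_dotProduct] at hdet
  exact one_ne_zero hdet

theorem pVec_ne_zero (g : SpecialLinearGroup (Fin 3) ℂ) : pVec g ≠ 0 := by
  intro h
  apply qVec_ne_zero g
  rw [qVec_eq_cross, ← pVec_eq_transpose, h, map_zero, LinearMap.zero_apply]

theorem pVec_dotProduct_qVec (g : Matrix (Fin 3) (Fin 3) ℂ) : pVec g ⬝ᵥ qVec g = 0 := by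
  rw [pVec_eq_transpose, qVec_eq_cross, dot_self_cross]

theorem exists_pVec_eq_qVec_eq_cross {x y z : Fin 3 → ℂ} (h : (x ⨯₃ y) ⬝ᵥ z = 1) :
    ∃ g : SpecialLinearGroup (Fin 3) ℂ, pVec g = x ∧ qVec g = x ⨯₃ y :=
  ⟨⟨(of ![x, y, z])ᵀ, by rwa [det_transpose, det_eq_cross_dotProduct]⟩, rfl, rfl⟩

theorem GmodU_orbit_description :
    {pq : (Fin 3 → ℂ) × (Fin 3 → ℂ) |
        pq.1 ≠ 0 ∧ pq.2 ≠ 0 ∧ pq.1 0 * pq.2 0 + pq.1 1 * pq.2 1 + pq.1 2 * pq.2 2 = 0}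
      = Set.range (fun g : Matrix.SpecialLinearGroup (Fin 3) ℂ =>
          (pVec (g : Matrix (Fin 3) (Fin 3) ℂ), qVec (g : Matrix (Fin 3) (Fin 3) ℂ))) := by
  ext ⟨p, q⟩
  simp only [Set.mem_ofPred_eq, Set.mem_range, Prod.mk.injEq, ← vec3_dotProduct]
  constructor
  · rintro ⟨hp, hq, hpq⟩
    obtain ⟨y, rfl⟩ := exists_cross_eq_of_dotProduct_eq_zero hp hpq
    obtain ⟨z, hz⟩ := exists_dotProduct_eq_one hq
    exact exists_pVec_eq_qVec_eq_cross hz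
  · rintro ⟨g, rfl, rfl⟩
    exact ⟨pVec_ne_zero g, qVec_ne_zero g, pVec_dotProduct_qVec g⟩
end
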